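/- In the tree T_1 (path v_k ⋯ v_1 u_1 ⋯ u_k with n − 2k ≥ 1 pendant vertices attached at v_1), the distance Perron vector satisfies x_{v_k} ≥ x_{v_{2k+1}}, i.e., the entry at the far endpoint of the shorter arm is at least the entry at any pendant vertex attached to v_1; moreover, if k > 2 the inequality is strict. -/

import Mathlib

/-!
Write `x_i`, `y_i` for the Perron entries at `v_{i+1}`, `u_{i+1}` and `P` for the sum of the
entries at the pendant vertices. Subtracting the eigen-equations at `u_j` and `v_j` shows that the
gaps `D_j = y_j - x_j` solve `ρ D_j + ∑ i, (2 min(i, j) + 1) D_i = P`. The tail sums `g_n = ∑_{i ≥ n} D_i`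
then satisfy a second-order difference inequality and vanish at `n = k`, so a discrete minimum
principle gives `∑ D_i = g_0 ≥ 0`. Subtracting the eigen-equations at `v_k` and at a pendant vertex
`p`, and using `∑ y_i ≥ ∑ x_i`, yields `(ρ + 2) (x_{v_k} - x_p) ≥ (k - 2) P`.
-/

open SimpleGraph

/-- The distance matrix of a graph: the (i,j)-entry is the graph distance between i and j. -/
noncomputable def distMatrix {V : Type*} [Fintype V] (G : SimpleGraph V) : Matrix V V ℝ :=
  fun i j => (G.dist i j : ℝ)

/-- The distance spectral radius: the largest eigenvalue of the distance matrix. -/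
noncomputable def distSpectralRadius {V : Type*} [Fintype V] (G : SimpleGraph V) : ℝ :=
  sSup {μ : ℝ | ∃ X : V → ℝ, X ≠ 0 ∧ (distMatrix G).mulVec X = μ • X}

/-- The distance Perron vector: the positive unit eigenvector of the distance matrix
corresponding to the distance spectral radius. -/
def IsDistPerronVector {V : Type*} [Fintype V] (G : SimpleGraph V) (X : V → ℝ) : Prop :=
  (∀ v, 0 < X v) ∧ (∑ v, (X v) ^ 2 = 1) ∧
    (distMatrix G).mulVec X = distSpectralRadius G • X

/-- The tree `T₁`: the path `v_k ⋯ v_1 u_1 ⋯ u_k` on `2k` vertices together with `m`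
pendant vertices attached at `v_1`.  Here `Sum.inl i` is `v_{i+1}`, `Sum.inr (Sum.inl i)`
is `u_{i+1}`, and `Sum.inr (Sum.inr j)` are the pendant vertices. -/
def treeT1 (k m : ℕ) : SimpleGraph (Fin k ⊕ (Fin k ⊕ Fin m)) :=
  SimpleGraph.fromRel (fun a b =>
    match a, b with
    | Sum.inl i, Sum.inl j => (i : ℕ) + 1 = (j : ℕ)
    | Sum.inr (Sum.inl i), Sum.inr (Sum.inl j) => (i : ℕ) + 1 = (j : ℕ)
    | Sum.inl i, Sum.inr (Sum.inl j) => (i : ℕ) = 0 ∧ (j : ℕ) = 0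
    | Sum.inl i, Sum.inr (Sum.inr _) => (i : ℕ) = 0
    | _, _ => False)

open Finset

theorem nonneg_of_discrete_supersolution {g : ℕ → ℝ} {k : ℕ} {ρ : ℝ} (hρ : 0 ≤ ρ)
    (hk : g k = 0) (h0 : 0 ≤ ρ * (g 0 - g 1) + g 0)
    (hstep : ∀ j, j + 1 < k → ρ * (g j + g (j + 2) - 2 * g (j + 1)) ≤ 2 * g (j + 1)) :
    ∀ n ≤ k, 0 ≤ g n := by
  obtain ⟨c, hc, hmin⟩ := (range (k + 1)).exists_min_image g nonempty_range_add_one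
  have hle : ∀ n ≤ k, g c ≤ g n := fun n hn => hmin n (Finset.mem_range.2 (by omega))
  suffices 0 ≤ g c from fun n hn => this.trans (hle n hn)
  rcases eq_or_ne c k with rfl | hck
  · exact hk.ge
  have hck : c < k := by have := Finset.mem_range.1 hc; omega
  rcases c with _ | j
  · have : ρ * (g 0 - g 1) ≤ 0 := mul_nonpos_of_nonneg_of_nonpos hρ (by linarith [hle 1 hck])
    linarith
  · have : 0 ≤ ρ * (g j + g (j + 2) - 2 * g (j + 1)) :=
      mul_nonneg hρ (by linarith [hle j (by omega), hle (j + 2) hck])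
    linarith [hstep j hck]

theorem sum_range_nonneg_of_min_kernel {k : ℕ} {ρ P : ℝ} {D : ℕ → ℝ} (hρ : 0 ≤ ρ) (hP : 0 ≤ P)
    (hD : ∀ j < k, ρ * D j + ∑ i ∈ range k, ((2 * min i j + 1 : ℕ) : ℝ) * D i = P) :
    0 ≤ ∑ i ∈ range k, D i := by
  obtain ⟨g, hg⟩ : ∃ g : ℕ → ℝ, ∀ n, g n = ∑ i ∈ Ico n k, D i := ⟨_, fun _ => rfl⟩
  have hD_eq : ∀ n < k, D n = g n - g (n + 1) := fun n hn => by
    simp only [hg, sum_eq_sum_Ico_succ_bot hn]; ring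
  have hrow_zero : ∑ i ∈ range k, ((2 * min i 0 + 1 : ℕ) : ℝ) * D i = g 0 := by
    rw [hg, Finset.range_eq_Ico]; simp
  have hrow_succ (j : ℕ) (hj : j + 1 < k) :
      ∑ i ∈ range k, ((2 * min i (j + 1) + 1 : ℕ) : ℝ) * D i
        - ∑ i ∈ range k, ((2 * min i j + 1 : ℕ) : ℝ) * D i = 2 * g (j + 1) := by
    have hlow : ∀ i ∈ range (j + 1), ((2 * min i (j + 1) + 1 : ℕ) : ℝ) * D i
        - ((2 * min i j + 1 : ℕ) : ℝ) * D i = 0 := fun i hi => by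
      have := Finset.mem_range.1 hi
      rw [min_eq_left (by omega), min_eq_left (by omega), sub_self]
    have hhigh : ∀ i ∈ Ico (j + 1) k, ((2 * min i (j + 1) + 1 : ℕ) : ℝ) * D i
        - ((2 * min i j + 1 : ℕ) : ℝ) * D i = 2 * D i := fun i hi => by
      have := (Finset.mem_Ico.1 hi).1
      rw [min_eq_right (by omega), min_eq_right (by omega)]
      push_cast; ring
    rw [← sum_sub_distrib, ← sum_range_add_sum_Ico _ hj.le, sum_eq_zero hlow, sum_congr rfl hhigh,
      ← mul_sum, zero_add, hg]
  have hg0 : g 0 = ∑ i ∈ range k, D i := by rw [hg, Finset.range_eq_Ico]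
  rw [← hg0]
  refine nonneg_of_discrete_supersolution hρ (by simp [hg]) ?_ ?_ 0 (Nat.zero_le k)
  · rcases Nat.eq_zero_or_pos k with rfl | hk
    · simp [hg]
    · have := hD 0 hk
      rw [hrow_zero, hD_eq 0 hk] at this
      linarith
  · intro j hj
    have h1 := hD (j + 1) hj
    have h2 := hD j (by omega)
    have h3 := hrow_succ j hj
    rw [hD_eq j (by omega), hD_eq (j + 1) hj] at *
    linarith

theorem sum_nonneg_of_min_kernel {k : ℕ} {ρ P : ℝ} {D : Fin k → ℝ} (hρ : 0 ≤ ρ) (hP : 0 ≤ P)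
    (hD : ∀ j : Fin k, ρ * D j + ∑ i : Fin k, ((2 * min (i : ℕ) j + 1 : ℕ) : ℝ) * D i = P) :
    0 ≤ ∑ i, D i := by
  let D' : ℕ → ℝ := fun n => if h : n < k then D ⟨n, h⟩ else 0
  have hsum (c : ℕ → ℝ) : ∑ i : Fin k, c ↑i * D i = ∑ n ∈ range k, c n * D' n := by
    rw [sum_fin_eq_sum_range]
    exact sum_congr rfl fun n hn => by simp [D', Finset.mem_range.1 hn]
  have h := sum_range_nonneg_of_min_kernel hρ hP (D := D') fun j hj => by
    rw [← hsum fun i => ((2 * min i j + 1 : ℕ) : ℝ)]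
    simpa [D', hj] using hD ⟨j, hj⟩
  have hsum_one := hsum fun _ => 1
  simp only [one_mul] at hsum_one
  rwa [hsum_one]

theorem sum_weight_mul_add_last_nonneg {k : ℕ} (hk : 0 < k) {x : Fin k → ℝ} (hx : ∀ i, 0 ≤ x i) :
    0 ≤ ∑ i : Fin k, ((k : ℝ) - 2 - 2 * i) * x i + ((k : ℝ) - 2) * ∑ i, x i +
      2 * x ⟨k - 1, by omega⟩ := by
  have h : ∑ i : Fin k, ((k : ℝ) - 2 - 2 * i) * x i + ((k : ℝ) - 2) * ∑ i, x i +
      2 * x ⟨k - 1, by omega⟩ =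
      ∑ i : Fin k, (2 * ((k : ℝ) - 2 - i) + if i = ⟨k - 1, by omega⟩ then 2 else 0) * x i := by
    simp only [add_mul, ite_mul, zero_mul, sum_add_distrib, sum_ite_eq',
      mem_univ, if_true, mul_sum]
    congr 1
    rw [← sum_add_distrib]
    exact sum_congr rfl fun i _ => by ring
  rw [h]
  refine sum_nonneg fun i _ => mul_nonneg ?_ (hx i)
  split_ifs with hi
  · norm_num [hi, Nat.cast_pred hk]
  · have : (i : ℕ) + 2 ≤ k := by have := Fin.val_ne_iff.2 hi; simp at this; omega
    have : ((i : ℕ) : ℝ) + 2 ≤ k := by exact_mod_cast this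
    linarith

namespace SimpleGraph

variable {V : Type*} {G : SimpleGraph V}

theorem le_length_of_le_add_one_of_adj {f : V → V → ℕ} (hf : ∀ a, f a a = 0)
    (hadj : ∀ a b c, G.Adj a b → f a c ≤ f b c + 1) {a b : V} (w : G.Walk a b) :
    f a b ≤ w.length := by
  induction w with
  | nil => simp [hf]
  | cons h p ih => simpa using (hadj _ _ _ h).trans (Nat.add_le_add_right ih 1)

theorem dist_eq_of_le_add_one_of_adj {f : V → V → ℕ} (hf : ∀ a, f a a = 0)
    (hadj : ∀ a b c, G.Adj a b → f a c ≤ f b c + 1) {a b : V}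
    (hw : ∃ w : G.Walk a b, w.length = f a b) : G.dist a b = f a b := by
  obtain ⟨w, hw⟩ := hw
  obtain ⟨w', hw'⟩ := Reachable.exists_walk_length_eq_dist ⟨w⟩
  exact le_antisymm (hw ▸ dist_le w) (hw' ▸ le_length_of_le_add_one_of_adj hf hadj w')

theorem exists_walk_length_eq_natDist {n : ℕ} {e : Fin n → V}
    (he : ∀ i j : Fin n, (i : ℕ) + 1 = j → G.Adj (e i) (e j)) (i j : Fin n) :
    ∃ w : G.Walk (e i) (e j), w.length = Nat.dist i j := by
  wlog hij : i ≤ j generalizing i j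
  · obtain ⟨w, hw⟩ := this j i (le_of_not_ge hij)
    exact ⟨w.reverse, by rw [Walk.length_reverse, hw, Nat.dist_comm]⟩
  obtain ⟨d, hd⟩ : ∃ d, (j : ℕ) = i + d := ⟨j - i, by omega⟩
  induction d generalizing j with
  | zero =>
    obtain rfl : j = i := Fin.ext (by omega)
    exact ⟨Walk.nil, by simp⟩
  | succ d ih =>
    obtain ⟨w, hw⟩ := ih ⟨i + d, by omega⟩ (Fin.mk_le_mk.2 (by omega)) rfl
    refine ⟨w.concat (he _ _ (by simp [hd]; omega)), ?_⟩
    simp [hw, Nat.dist]; omega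

end SimpleGraph

section DistanceEigenvector

variable {V : Type*} [Fintype V] {G : SimpleGraph V} {ρ : ℝ} {X : V → ℝ}

theorem mul_sub_eq_sum_dist_sub_mul (hX : (distMatrix G).mulVec X = ρ • X) (a b : V) :
    ρ * (X a - X b) = ∑ w, ((G.dist a w : ℝ) - G.dist b w) * X w := by
  have ha := congrFun hX a
  have hb := congrFun hX b
  simp only [Matrix.mulVec, dotProduct, distMatrix, Pi.smul_apply, smul_eq_mul] at ha hb
  simp only [sub_mul, sum_sub_distrib, mul_sub, ← ha, ← hb]

theorem nonneg_of_distMatrix_mulVec_eq_smul (hX : (distMatrix G).mulVec X = ρ • X)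
    (hpos : ∀ v, 0 < X v) (a : V) : 0 ≤ ρ := by
  have ha := congrFun hX a
  simp only [Matrix.mulVec, dotProduct, distMatrix, Pi.smul_apply, smul_eq_mul] at ha
  refine nonneg_of_mul_nonneg_left ?_ (hpos a)
  rw [← ha]
  exact sum_nonneg fun w _ => mul_nonneg (Nat.cast_nonneg _) (hpos w).le

end DistanceEigenvector

namespace treeT1

variable {k m : ℕ}

def depth : Fin k ⊕ (Fin k ⊕ Fin m) → ℕ
  | .inl i => i
  | .inr (.inl i) => i + 1
  | .inr (.inr _) => 1

def branch : Fin k ⊕ (Fin k ⊕ Fin m) → ℕ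
  | .inl _ => 0
  | .inr (.inl _) => 1
  | .inr (.inr s) => s + 2

-- `depth` is the distance to the hub `v_1`; a shortest path passes through the hub exactly when
-- its ends lie on different branches at `v_1` (the hub itself counts as part of the `v`-branch).
def treeDist (a b : Fin k ⊕ (Fin k ⊕ Fin m)) : ℕ :=
  if branch a = branch b then Nat.dist (depth a) (depth b) else depth a + depth b

theorem treeDist_self (a : Fin k ⊕ (Fin k ⊕ Fin m)) : treeDist a a = 0 := by
  simp [treeDist]

theorem treeDist_le_add_one_of_adj (a b c : Fin k ⊕ (Fin k ⊕ Fin m))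
    (h : (treeT1 k m).Adj a b) : treeDist a c ≤ treeDist b c + 1 := by
  rcases a with i | i | i <;> rcases b with j | j | j <;> rcases c with l | l | l <;>
    simp only [treeT1, fromRel_adj, ne_eq, Sum.inl.injEq, Sum.inr.injEq, Fin.ext_iff,
      Sum.inl_ne_inr, Sum.inr_ne_inl, not_false_iff, true_and, and_false,
      or_false, false_or] at h <;>
    simp only [treeDist] <;> split_ifs <;>
    simp only [branch, depth, Nat.dist, not_true_eq_false] at * <;> omega

theorem adj_inl_inl {i j : Fin k} (h : (i : ℕ) + 1 = j) :
    (treeT1 k m).Adj (.inl i) (.inl j) :=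
  ⟨by simp [Fin.ext_iff]; omega, Or.inl h⟩

theorem adj_inr_inl_inr_inl {i j : Fin k} (h : (i : ℕ) + 1 = j) :
    (treeT1 k m).Adj (.inr (.inl i)) (.inr (.inl j)) :=
  ⟨by simp [Fin.ext_iff]; omega, Or.inl h⟩

theorem adj_hub_inr_inl (hk : 0 < k) :
    (treeT1 k m).Adj (.inl ⟨0, hk⟩) (.inr (.inl ⟨0, hk⟩)) :=
  ⟨by simp, Or.inl ⟨rfl, rfl⟩⟩

theorem adj_hub_inr_inr (hk : 0 < k) (s : Fin m) :
    (treeT1 k m).Adj (.inl ⟨0, hk⟩) (.inr (.inr s)) :=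
  ⟨by simp, Or.inl rfl⟩

theorem exists_walk_to_hub (hk : 0 < k) (a : Fin k ⊕ (Fin k ⊕ Fin m)) :
    ∃ w : (treeT1 k m).Walk a (.inl ⟨0, hk⟩), w.length = depth a := by
  rcases a with i | i | s
  · simpa [depth, Nat.dist] using
      exists_walk_length_eq_natDist (fun _ _ => adj_inl_inl (m := m)) i ⟨0, hk⟩
  · obtain ⟨w, hw⟩ :=
      exists_walk_length_eq_natDist (fun _ _ => adj_inr_inl_inr_inl (m := m)) i ⟨0, hk⟩
    exact ⟨w.concat (adj_hub_inr_inl hk).symm, by simp [hw, depth, Nat.dist]⟩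
  · exact ⟨.cons (adj_hub_inr_inr hk s).symm .nil, rfl⟩

theorem exists_walk_length_eq_treeDist (hk : 0 < k) (a b : Fin k ⊕ (Fin k ⊕ Fin m)) :
    ∃ w : (treeT1 k m).Walk a b, w.length = treeDist a b := by
  by_cases hab : branch a = branch b
  · rcases a with i | i | s <;> rcases b with j | j | t <;> simp only [branch] at hab <;>
      simp only [treeDist, branch, depth, hab, if_true]
    all_goals try omega
    · exact exists_walk_length_eq_natDist (fun _ _ => adj_inl_inl) i j
    · simpa [Nat.dist] using exists_walk_length_eq_natDist (fun _ _ => adj_inr_inl_inr_inl) i j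
    · obtain rfl : s = t := Fin.ext (by omega)
      exact ⟨.nil, by simp⟩
  · obtain ⟨wa, ha⟩ := exists_walk_to_hub hk a
    obtain ⟨wb, hb⟩ := exists_walk_to_hub hk b
    exact ⟨wa.append wb.reverse, by simp [ha, hb, treeDist, hab]⟩

theorem dist_eq_treeDist (hk : 0 < k) (a b : Fin k ⊕ (Fin k ⊕ Fin m)) :
    (treeT1 k m).dist a b = treeDist a b :=
  dist_eq_of_le_add_one_of_adj treeDist_self treeDist_le_add_one_of_adj
    (exists_walk_length_eq_treeDist hk a b)

variable {ρ : ℝ} {X : Fin k ⊕ (Fin k ⊕ Fin m) → ℝ}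

theorem arm_gap_eq (hk : 0 < k) (hX : (distMatrix (treeT1 k m)).mulVec X = ρ • X) (j : Fin k) :
    ρ * (X (.inr (.inl j)) - X (.inl j)) +
      ∑ i : Fin k, ((2 * min (i : ℕ) j + 1 : ℕ) : ℝ) * (X (.inr (.inl i)) - X (.inl i)) =
      ∑ s, X (.inr (.inr s)) := by
  have hv (i : Fin k) : ((treeT1 k m).dist (.inr (.inl j)) (.inl i) : ℝ) -
      (treeT1 k m).dist (.inl j) (.inl i) = ((2 * min (i : ℕ) j + 1 : ℕ) : ℝ) := by
    have h : (treeT1 k m).dist (.inr (.inl j)) (.inl i) =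
        (treeT1 k m).dist (.inl j) (.inl i) + (2 * min (i : ℕ) j + 1) := by
      simp [dist_eq_treeDist hk, treeDist, branch, depth, Nat.dist]; omega
    rw [h]; push_cast; ring
  have hu (i : Fin k) : ((treeT1 k m).dist (.inr (.inl j)) (.inr (.inl i)) : ℝ) -
      (treeT1 k m).dist (.inl j) (.inr (.inl i)) = -((2 * min (i : ℕ) j + 1 : ℕ) : ℝ) := by
    have h : (treeT1 k m).dist (.inl j) (.inr (.inl i)) =
        (treeT1 k m).dist (.inr (.inl j)) (.inr (.inl i)) + (2 * min (i : ℕ) j + 1) := by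
      simp [dist_eq_treeDist hk, treeDist, branch, depth, Nat.dist]; omega
    rw [h]; push_cast; ring
  have hp (s : Fin m) : ((treeT1 k m).dist (.inr (.inl j)) (.inr (.inr s)) : ℝ) -
      (treeT1 k m).dist (.inl j) (.inr (.inr s)) = 1 := by
    simp [dist_eq_treeDist hk, treeDist, branch, depth]
  rw [mul_sub_eq_sum_dist_sub_mul hX, Fintype.sum_sum_type, Fintype.sum_sum_type]
  simp only [hv, hu, hp, neg_mul, one_mul, sum_neg_distrib, mul_sub, sum_sub_distrib]
  ring

theorem end_sub_pendant_eq (hk : 0 < k) (hX : (distMatrix (treeT1 k m)).mulVec X = ρ • X)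
    (t : Fin m) :
    ρ * (X (.inl ⟨k - 1, by omega⟩) - X (.inr (.inr t))) =
      ∑ i : Fin k, ((k : ℝ) - 2 - 2 * i) * X (.inl i) +
        ((k : ℝ) - 2) * (∑ i, X (.inr (.inl i)) + ∑ s, X (.inr (.inr s))) +
        2 * X (.inr (.inr t)) := by
  have hv (i : Fin k) : ((treeT1 k m).dist (.inl ⟨k - 1, by omega⟩) (.inl i) : ℝ) -
      (treeT1 k m).dist (.inr (.inr t)) (.inl i) = k - 2 - 2 * i := by
    have h : (treeT1 k m).dist (.inl ⟨k - 1, by omega⟩) (.inl i) + 2 * i + 2 =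
        (treeT1 k m).dist (.inr (.inr t)) (.inl i) + k := by
      simp [dist_eq_treeDist hk, treeDist, branch, depth, Nat.dist]; omega
    rify at h; linarith
  have hu (i : Fin k) : ((treeT1 k m).dist (.inl ⟨k - 1, by omega⟩) (.inr (.inl i)) : ℝ) -
      (treeT1 k m).dist (.inr (.inr t)) (.inr (.inl i)) = k - 2 := by
    have h : (treeT1 k m).dist (.inl ⟨k - 1, by omega⟩) (.inr (.inl i)) + 2 =
        (treeT1 k m).dist (.inr (.inr t)) (.inr (.inl i)) + k := by
      simp [dist_eq_treeDist hk, treeDist, branch, depth]; omega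
    rify at h; linarith
  have hp (s : Fin m) : ((treeT1 k m).dist (.inl ⟨k - 1, by omega⟩) (.inr (.inr s)) : ℝ) -
      (treeT1 k m).dist (.inr (.inr t)) (.inr (.inr s)) = k - 2 + if t = s then 2 else 0 := by
    have hts : t = s ↔ (t : ℕ) = s := Fin.ext_iff
    by_cases h : t = s <;>
      simp [dist_eq_treeDist hk, treeDist, branch, depth, Nat.cast_pred hk, h, hts.not.1]
  rw [mul_sub_eq_sum_dist_sub_mul hX, Fintype.sum_sum_type, Fintype.sum_sum_type]
  simp only [hv, hu, hp, add_mul, sum_add_distrib, ite_mul, zero_mul,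
    sum_ite_eq, mem_univ, if_true, ← mul_sum]
  ring

end treeT1

/-- In the tree `T₁`, the Perron entry at the far endpoint `v_k` of the shorter arm is at
least the entry at any pendant vertex attached at `v_1`; for `k > 2` the inequality is
strict. -/
theorem stmt14 (k m : ℕ) (hk : 2 ≤ k)
    (X : (Fin k ⊕ (Fin k ⊕ Fin m)) → ℝ) (hX : IsDistPerronVector (treeT1 k m) X) :
    ∀ j : Fin m,
      X (Sum.inl ⟨k - 1, by omega⟩) ≥ X (Sum.inr (Sum.inr j)) ∧
      (2 < k → X (Sum.inl ⟨k - 1, by omega⟩) > X (Sum.inr (Sum.inr j))) := by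
  intro t
  obtain ⟨hpos, -, hX⟩ := hX
  have hρ := nonneg_of_distMatrix_mulVec_eq_smul hX hpos (.inr (.inr t))
  have hP : X (.inr (.inr t)) ≤ ∑ s, X (.inr (.inr s)) :=
    single_le_sum (f := fun s => X (.inr (.inr s))) (fun s _ => (hpos _).le)
      (mem_univ t)
  have harms : ∑ i, X (.inl i) ≤ ∑ i, X (.inr (.inl i)) := by
    have := sum_nonneg_of_min_kernel hρ ((hpos _).le.trans hP) (treeT1.arm_gap_eq (by omega) hX)
    simpa [sum_sub_distrib] using this
  have hweights := sum_weight_mul_add_last_nonneg (by omega) fun i => (hpos (.inl i)).le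
  have hkey := treeT1.end_sub_pendant_eq (by omega) hX t
  have hk' : (2 : ℝ) ≤ k := by exact_mod_cast hk
  have hbound : ((k : ℝ) - 2) * ∑ s, X (.inr (.inr s)) ≤
      (distSpectralRadius (treeT1 k m) + 2) * (X (.inl ⟨k - 1, by omega⟩) - X (.inr (.inr t))) := by
    linarith [mul_le_mul_of_nonneg_left harms (sub_nonneg.2 hk')]
  have hρ2 : 0 < distSpectralRadius (treeT1 k m) + 2 := by linarith
  have hPpos : 0 < ∑ s, X (.inr (.inr s)) := (hpos _).trans_le hP
  refine ⟨sub_nonneg.1 (nonneg_of_mul_nonneg_right ?_ hρ2), fun h2k => sub_pos.1 ?_⟩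
  · exact (mul_nonneg (sub_nonneg.2 hk') hPpos.le).trans hbound
  · have hk2 : (2 : ℝ) < k := by exact_mod_cast h2k
    exact pos_of_mul_pos_right ((mul_pos (sub_pos.2 hk2) hPpos).trans_le hbound) hρ2.le
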